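/- Trace equivalence does not preserve diamond convergence: there exists a finite LTS with states p, q that are trace equivalent (traces(p) = traces(q)) and a diamond ◇ = b¹ ∥ (a₁a₂)¹ such that p ◇-converges in some state but q does not ◇-converge in any state. -/

import Mathlib

/-- A sequence is non-monotone if it contains at least two distinct actions. -/
def NonMono {A : Type*} [DecidableEq A] (s : List A) : Prop := 2 ≤ s.toFinset.card

/-- A diamond pattern: finitely supported cardinality maps on actions and on
non-monotone action sequences. -/
structure Diamond (A : Type*) [DecidableEq A] where
  Ca : A →₀ ℕ
  Cs : List A →₀ ℕ
  nonmono : ∀ s ∈ Cs.support, NonMono s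

namespace Diamond

variable {A : Type*} [DecidableEq A]

/-- The empty diamond. -/
def emptyD : Diamond A := ⟨0, 0, by simp⟩

/-- The size of a diamond. -/
def size (d : Diamond A) : ℕ :=
  d.Ca.sum (fun _ n => n) + d.Cs.sum (fun s n => s.length * n)

/-- The head actions of a diamond. -/
def hdSet (d : Diamond A) : Set A :=
  {a | 0 < d.Ca a ∨ ∃ s : List A, 0 < d.Cs s ∧ s.head? = some a}

/-- Single-action tail operation on diamonds. -/
def tl (d : Diamond A) (a : A) : Set (Diamond A) :=
  {d' |
    (0 < d.Ca a ∧ d'.Ca = d.Ca.update a (d.Ca a - 1) ∧ d'.Cs = d.Cs)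
    ∨ (∃ s : List A, NonMono s ∧ 0 < d.Cs (a :: s) ∧ d'.Ca = d.Ca ∧
        d'.Cs = (d.Cs.update (a :: s) (d.Cs (a :: s) - 1)).update s (d.Cs s + 1))
    ∨ (∃ (b : A) (k : ℕ), 0 < k ∧ b ≠ a ∧ 0 < d.Cs (a :: List.replicate k b) ∧
        d'.Ca = d.Ca.update b (d.Ca b + k) ∧
        d'.Cs = d.Cs.update (a :: List.replicate k b) (d.Cs (a :: List.replicate k b) - 1))}

/-- Tail operation iterated over an action sequence. -/
def tlSeq (d : Diamond A) : List A → Set (Diamond A)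
  | [] => {d}
  | a :: s => ⋃ d' ∈ tl d a, tlSeq d' s

/-- `TlD d dpf r` : `r` is in the diamond-tail `tl(d, dpf)`. -/
inductive TlD : Diamond A → Diamond A → Diamond A → Prop
  | empty (d : Diamond A) : TlD d emptyD d
  | step {d dpf r : Diamond A} {a : A} {d' dpf' : Diamond A} :
      a ∈ hdSet dpf → d' ∈ tl d a → dpf' ∈ tl dpf a → TlD d' dpf' r → TlD d dpf r

/-- The prefix relation on diamonds: `dpf ⊑ d` iff `tl(d, dpf) ≠ ∅`. -/
def Prefix (dpf d : Diamond A) : Prop := ∃ r, TlD d dpf r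

/-- Sequence-of relation: `s` is an interleaving prefix of the diamond `d`. -/
inductive SeqOf : List A → Diamond A → Prop
  | nil (d : Diamond A) : SeqOf [] d
  | cons {a : A} {s : List A} {d d' : Diamond A} :
      d' ∈ tl d a → SeqOf s d' → SeqOf (a :: s) d

/-- The singleton diamond `a¹`. -/
noncomputable def singleD (a : A) : Diamond A := ⟨Finsupp.single a 1, 0, by simp⟩

end Diamond

section LTS

variable {Q A : Type*} [DecidableEq A]

/-- Transition relation extended to action sequences. -/
inductive TrSeq (Tr : Q → A → Q → Prop) : Q → List A → Q → Prop
  | nil (q : Q) : TrSeq Tr q [] q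
  | cons {q q' q'' : Q} {a : A} {s : List A} :
      Tr q a q' → TrSeq Tr q' s q'' → TrSeq Tr q (a :: s) q''

open Diamond in
/-- Fuel-indexed strict diamond convergence (the fuel is the diamond size;
every tail step decreases the size by exactly one). -/
def SConvF (Tr : Q → A → Q → Prop) (R : Q → Q → Prop) :
    ℕ → Diamond A → Q → Q → Prop
  | 0, d, q, q' => d = emptyD ∧ R q q'
  | n + 1, d, q, q' =>
    (d = emptyD ∧ R q q') ∨
    (d ≠ emptyD ∧
      (∀ a ∈ hdSet d, ∀ d' ∈ tl d a, ∃ p, Tr q a p ∧ SConvF Tr R n d' p q') ∧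
      (∀ (a : A) (p : Q), Tr q a p → ∃ d' ∈ tl d a, SConvF Tr R n d' p q'))

/-- Strict diamond convergence up to `R`: `SConv Tr R d q̂ q̌` means
`q̂ ⟹^d [q̌]_R`. -/
def SConv (Tr : Q → A → Q → Prop) (R : Q → Q → Prop)
    (d : Diamond A) (q q' : Q) : Prop :=
  SConvF Tr R d.size d q q'

open Diamond in
/-- (Non-strict) diamond convergence up to `R`: `Conv Tr R d q̂ q̌` means
`q̂ ⟶^d [q̌]_R`. -/
def Conv (Tr : Q → A → Q → Prop) (R : Q → Q → Prop)
    (d : Diamond A) (q q' : Q) : Prop :=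
  (d = emptyD ∧ R q q') ∨
  (d ≠ emptyD ∧ ∀ a ∈ hdSet d, ∀ d' ∈ tl d a, ∃ p, Tr q a p ∧ SConv Tr R d' p q')

end LTS

/-!
Read the actions `0, 1, 2` as `a₁, a₂, b`. The state `p = grid 0 0` is the corner of the grid
interleaving `b` with `a₁a₂`: every interleaving leads to the opposite corner and every intermediate
state has exactly the transitions the remaining diamond allows, so `p` converges. The state `q = q₀`
behaves like `p` after `a₁`, but its `b`-successor `q₁` has, besides `grid 1 1`, a stuck
`a₁`-successor `q₂`. The traces of `q₂` are among those of `grid 1 1`, so `p` and `q` are trace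
equivalent. Yet convergence of `q` forces `q₁` to converge strictly for the tail `a₁a₂`, and strictness
demands that the step to `q₂` be continued by `a₂`, which is impossible.
-/

open Finsupp (single)

theorem Finsupp.update_self_sub_one {A : Type*} [DecidableEq A] (C : A →₀ ℕ) (a : A) :
    C.update a (C a - 1) = C - single a 1 := by
  ext x
  by_cases h : x = a <;> simp [Finsupp.update_apply, h]

namespace Diamond

variable {A : Type*} [DecidableEq A]

theorem ext {d d' : Diamond A} (hCa : d.Ca = d'.Ca) (hCs : d.Cs = d'.Cs) : d = d' := by
  cases d; cases d'; simp_all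

theorem size_pos_of_ne_emptyD {d : Diamond A} (hd : d ≠ emptyD) : 0 < d.size := by
  by_contra! h
  simp only [size, Finsupp.sum, nonpos_iff_eq_zero, add_eq_zero, Finset.sum_eq_zero_iff,
    Finsupp.mem_support_iff, mul_eq_zero] at h
  obtain ⟨hCa, hCs⟩ := h
  refine hd (ext (Finsupp.ext fun x => ?_) (Finsupp.ext fun s => ?_))
  · show d.Ca x = 0
    by_contra hx
    exact hx (hCa x hx)
  · show d.Cs s = 0
    by_contra hs
    have hlen : 2 ≤ s.length :=
      (d.nonmono s (Finsupp.mem_support_iff.mpr hs)).trans (List.toFinset_card_le s)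
    rcases hCs s hs with h | h
    · simp [h] at hlen
    · exact hs h

theorem size_eq_succ_of_mem_tl {d d' : Diamond A} {a : A} (h : d' ∈ tl d a) :
    d.size = d'.size + 1 := by
  have hCa (f : A →₀ ℕ) (i : A) (n : ℕ) :
      (f.update i n).sum (fun _ m => m) + f i = f.sum (fun _ m => m) + n :=
    Finsupp.sum_update_add _ _ _ _ (fun _ => rfl) (fun _ _ _ => rfl)
  have hCs (f : List A →₀ ℕ) (i : List A) (n : ℕ) :
      (f.update i n).sum (fun s m => s.length * m) + i.length * f i
        = f.sum (fun s m => s.length * m) + i.length * n :=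
    Finsupp.sum_update_add _ _ _ _ (fun _ => mul_zero _) (fun _ _ _ => mul_add _ _ _)
  simp only [size]
  rcases h with ⟨hpos, hCa', hCs'⟩ | ⟨s, -, hpos, hCa', hCs'⟩ |
    ⟨b, k, -, -, hpos, hCa', hCs'⟩
  · have := hCa d.Ca a (d.Ca a - 1)
    rw [hCa', hCs']
    omega
  · have h1 := hCs d.Cs (a :: s) (d.Cs (a :: s) - 1)
    have h2 := hCs (d.Cs.update (a :: s) (d.Cs (a :: s) - 1)) s (d.Cs s + 1)
    have hs : s ≠ a :: s := fun h => by simpa using congrArg List.length h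
    rw [Finsupp.update_apply, if_neg hs] at h2
    rw [hCa', hCs']
    obtain ⟨c, hc⟩ := Nat.exists_eq_add_one_of_ne_zero hpos.ne'
    rw [hc, Nat.add_sub_cancel] at h1 h2 ⊢
    simp only [List.length_cons] at h1 h2
    nlinarith
  · have h1 := hCa d.Ca b (d.Ca b + k)
    have h2 := hCs d.Cs (a :: List.replicate k b) (d.Cs (a :: List.replicate k b) - 1)
    rw [hCa', hCs']
    obtain ⟨c, hc⟩ := Nat.exists_eq_add_one_of_ne_zero hpos.ne'
    rw [hc, Nat.add_sub_cancel] at h2 ⊢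
    simp only [List.length_cons, List.length_replicate] at h2
    nlinarith

def ofActions (C : A →₀ ℕ) : Diamond A := ⟨C, 0, by simp⟩

theorem ofActions_zero : ofActions (0 : A →₀ ℕ) = emptyD := rfl

theorem singleD_eq_ofActions (a : A) : singleD a = ofActions (single a 1) := rfl

theorem ofActions_ne_emptyD {C : A →₀ ℕ} (hC : C ≠ 0) : ofActions C ≠ emptyD :=
  fun h => hC (congrArg Diamond.Ca h)

theorem singleD_ne_emptyD (a : A) : singleD a ≠ emptyD :=
  ofActions_ne_emptyD (by simp)

theorem mem_hdSet_ofActions {C : A →₀ ℕ} {a : A} : a ∈ hdSet (ofActions C) ↔ 0 < C a := by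
  simp [hdSet, ofActions]

theorem mem_tl_ofActions {C : A →₀ ℕ} {a : A} {d' : Diamond A} :
    d' ∈ tl (ofActions C) a ↔ 0 < C a ∧ d' = ofActions (C - single a 1) := by
  constructor
  · rintro (⟨hpos, hCa, hCs⟩ | ⟨s, -, hpos, -⟩ | ⟨b, k, -, -, hpos, -⟩)
    · exact ⟨hpos, ext (hCa.trans (Finsupp.update_self_sub_one C a)) hCs⟩
    · simp [ofActions] at hpos
    · simp [ofActions] at hpos
  · rintro ⟨hpos, rfl⟩
    exact Or.inl ⟨hpos, (Finsupp.update_self_sub_one C a).symm, rfl⟩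

theorem mem_hdSet_singleD {a b : A} : b ∈ hdSet (singleD a) ↔ b = a := by
  simp [singleD, hdSet, pos_iff_ne_zero, Finsupp.single_apply_ne_zero]

theorem mem_tl_singleD_self {a : A} {d' : Diamond A} : d' ∈ tl (singleD a) a ↔ d' = emptyD := by
  simp [singleD_eq_ofActions, mem_tl_ofActions, ofActions_zero]

theorem nonMono_pair {x y : A} (hxy : x ≠ y) : NonMono [x, y] := by
  simp [NonMono, Finset.card_pair hxy]

noncomputable def withPair (C : A →₀ ℕ) {x y : A} (hxy : x ≠ y) : Diamond A :=
  ⟨C, single [x, y] 1, fun s hs => by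
    rw [Finsupp.mem_support_single] at hs
    exact hs.1 ▸ nonMono_pair hxy⟩

theorem withPair_ne_emptyD {C : A →₀ ℕ} {x y : A} (hxy : x ≠ y) :
    withPair C hxy ≠ emptyD := by
  intro h
  simpa [withPair, emptyD] using congrArg (fun d => d.Cs [x, y]) h

variable {C : A →₀ ℕ} {x y : A} {hxy : x ≠ y}

theorem mem_hdSet_withPair {a : A} : a ∈ hdSet (withPair C hxy) ↔ 0 < C a ∨ a = x := by
  simp only [hdSet, withPair, pos_iff_ne_zero, Finsupp.single_apply_ne_zero]
  refine or_congr_right ⟨?_, ?_⟩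
  · rintro ⟨s, ⟨rfl, -⟩, h⟩
    simpa [eq_comm] using h
  · rintro rfl
    exact ⟨[a, y], ⟨rfl, one_ne_zero⟩, rfl⟩

theorem mem_tl_withPair_self (hC : C x = 0) {d' : Diamond A} :
    d' ∈ tl (withPair C hxy) x ↔ d' = ofActions (C + single y 1) := by
  have hCa : C.update y (C y + 1) = C + single y 1 := by
    ext z
    by_cases h : z = y <;> simp [Finsupp.update_apply, h]
  have hCs : (single [x, y] 1).update [x, y] (single [x, y] 1 [x, y] - 1) = 0 := by
    simp [← Finsupp.erase_eq_update_zero]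
  constructor
  · rintro (⟨hpos, -⟩ | ⟨s, hnm, hpos, -⟩ | ⟨b, k, -, -, hpos, hCa', hCs'⟩)
    · simp [withPair, hC] at hpos
    · simp [withPair, pos_iff_ne_zero, Finsupp.single_apply_ne_zero] at hpos
      simp [hpos, NonMono] at hnm
    · simp [withPair, pos_iff_ne_zero, Finsupp.single_apply_ne_zero] at hpos
      obtain ⟨rfl, rfl⟩ : 1 = k ∧ y = b := by
        simpa [eq_comm (a := List.replicate _ _), List.eq_replicate_iff] using hpos
      exact ext (hCa'.trans hCa) (hCs'.trans hCs)
  · rintro rfl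
    exact Or.inr (Or.inr ⟨y, 1, one_pos, hxy.symm, by simp [withPair], hCa.symm, hCs.symm⟩)

theorem mem_tl_withPair_of_ne {a : A} (ha : a ≠ x) {d' : Diamond A} :
    d' ∈ tl (withPair C hxy) a ↔ 0 < C a ∧ d' = withPair (C - single a 1) hxy := by
  constructor
  · rintro (⟨hpos, hCa, hCs⟩ | ⟨s, -, hpos, -⟩ | ⟨b, k, -, -, hpos, -⟩)
    · exact ⟨hpos, ext (hCa.trans (Finsupp.update_self_sub_one C a)) hCs⟩
    · simp [withPair, ha] at hpos
    · simp [withPair, ha] at hpos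
  · rintro ⟨hpos, rfl⟩
    exact Or.inl ⟨hpos, (Finsupp.update_self_sub_one C a).symm, rfl⟩

end Diamond

section StrictConvergence

open Diamond

variable {Q A : Type*} [DecidableEq A] {Tr : Q → A → Q → Prop} {R : Q → Q → Prop}

theorem sConv_emptyD {q q' : Q} : SConv Tr R emptyD q q' ↔ R q q' := by
  simp [SConv, SConvF, size, emptyD]

theorem sConv_iff {d : Diamond A} (hd : d ≠ emptyD) {q q' : Q} :
    SConv Tr R d q q' ↔
      (∀ a ∈ hdSet d, ∀ d' ∈ tl d a, ∃ p, Tr q a p ∧ SConv Tr R d' p q') ∧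
      (∀ a p, Tr q a p → ∃ d' ∈ tl d a, SConv Tr R d' p q') := by
  obtain ⟨n, hn⟩ := Nat.exists_eq_add_one_of_ne_zero (size_pos_of_ne_emptyD hd).ne'
  have hfuel {a : A} {d' : Diamond A} (h : d' ∈ tl d a) (p : Q) :
      SConvF Tr R n d' p q' ↔ SConv Tr R d' p q' := by
    rw [SConv, show d'.size = n by have := size_eq_succ_of_mem_tl h; omega]
  rw [SConv, hn]
  simp only [SConvF, hd, false_and, false_or, ne_eq, not_false_eq_true, true_and]
  exact and_congr
    (forall₂_congr fun a _ => forall₂_congr fun d' h => exists_congr fun p =>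
      and_congr_right' (hfuel h p))
    (forall₂_congr fun a p => imp_congr_right fun _ => exists_congr fun d' =>
      and_congr_right fun h => hfuel h p)

theorem sConv_singleD {a : A} {x y y' : Q} (hxy : Tr x a y)
    (hx : ∀ b z, Tr x b z → b = a ∧ z = y) (hR : R y y') : SConv Tr R (singleD a) x y' := by
  rw [sConv_iff (singleD_ne_emptyD a)]
  constructor
  · rintro b hb d' hd'
    rw [mem_hdSet_singleD] at hb
    subst hb
    rw [mem_tl_singleD_self] at hd'
    exact ⟨y, hxy, hd' ▸ sConv_emptyD.mpr hR⟩
  · intro b z hz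
    obtain ⟨rfl, rfl⟩ := hx b z hz
    exact ⟨emptyD, mem_tl_singleD_self.mpr rfl, sConv_emptyD.mpr hR⟩

theorem sConv_square {a b : A} {x ya yb z : Q} (hxa : Tr x a ya) (hxb : Tr x b yb)
    (hx : ∀ c w, Tr x c w → (c = a ∧ w = ya) ∨ (c = b ∧ w = yb))
    (hya : SConv Tr R (singleD b) ya z) (hyb : SConv Tr R (singleD a) yb z) :
    SConv Tr R (ofActions (single a 1 + single b 1)) x z := by
  have htl_a : ofActions (single a 1 + single b 1 - single a 1) = singleD b := by
    rw [add_tsub_cancel_left]; rfl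
  have htl_b : ofActions (single a 1 + single b 1 - single b 1) = singleD a := by
    rw [add_tsub_cancel_right]; rfl
  rw [sConv_iff (ofActions_ne_emptyD (by simp))]
  constructor
  · intro c hc d' hd'
    obtain ⟨-, rfl⟩ := mem_tl_ofActions.mp hd'
    rw [mem_hdSet_ofActions] at hc
    obtain rfl | rfl : c = a ∨ c = b := by
      by_contra! h
      simp [Ne.symm h.1, Ne.symm h.2] at hc
    · exact ⟨ya, hxa, htl_a ▸ hya⟩
    · exact ⟨yb, hxb, htl_b ▸ hyb⟩
  · intro c w hw
    rcases hx c w hw with ⟨rfl, rfl⟩ | ⟨rfl, rfl⟩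
    · exact ⟨_, mem_tl_ofActions.mpr ⟨by simp, rfl⟩, htl_a ▸ hya⟩
    · exact ⟨_, mem_tl_ofActions.mpr ⟨by simp, rfl⟩, htl_b ▸ hyb⟩

theorem sConv_withPair_zero {x y : A} (hxy : x ≠ y) {s t z : Q} (hst : Tr s x t)
    (hs : ∀ c w, Tr s c w → c = x ∧ w = t) (ht : SConv Tr R (singleD y) t z) :
    SConv Tr R (withPair 0 hxy) s z := by
  have htl {d' : Diamond A} : d' ∈ tl (withPair 0 hxy) x ↔ d' = singleD y := by
    rw [mem_tl_withPair_self (by simp), zero_add, singleD_eq_ofActions]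
  rw [sConv_iff (withPair_ne_emptyD hxy)]
  constructor
  · intro c hc d' hd'
    obtain rfl : c = x := by simpa [mem_hdSet_withPair] using hc
    exact ⟨t, hst, htl.mp hd' ▸ ht⟩
  · intro c w hw
    obtain ⟨rfl, rfl⟩ := hs c w hw
    exact ⟨singleD y, htl.mpr rfl, ht⟩

theorem not_sConv_withPair_zero {x y : A} (hxy : x ≠ y) {s t z : Q} (hst : Tr s x t)
    (ht : ∀ w, ¬ Tr t y w) : ¬ SConv Tr R (withPair 0 hxy) s z := by
  intro h
  obtain ⟨d', hd', h'⟩ := ((sConv_iff (withPair_ne_emptyD hxy)).mp h).2 x t hst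
  rw [mem_tl_withPair_self (by simp), zero_add, ← singleD_eq_ofActions] at hd'
  subst hd'
  obtain ⟨w, hw, -⟩ := ((sConv_iff (singleD_ne_emptyD y)).mp h').1
    y (mem_hdSet_singleD.mpr rfl) emptyD (mem_tl_singleD_self.mpr rfl)
  exact ht w hw

end StrictConvergence

section Traces

variable {Q A : Type*} (next : Q → A → List Q)

abbrev Step (x : Q) (a : A) (y : Q) : Prop := y ∈ next x a

def post (S : List Q) (a : A) : List Q := S.flatMap (next · a)

def hasTrace (S : List Q) : List A → Bool
  | [] => !S.isEmpty
  | a :: s => hasTrace (post next S a) s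

theorem hasTrace_iff {S : List Q} {s : List A} :
    hasTrace next S s ↔ ∃ x ∈ S, ∃ r, TrSeq (Step next) x s r := by
  induction s generalizing S with
  | nil =>
    have hnil (x : Q) : ∃ r, TrSeq (Step next) x [] r := ⟨x, .nil x⟩
    simp [hasTrace, List.eq_nil_iff_forall_not_mem, hnil]
  | cons a s ih =>
    simp only [hasTrace, ih, post, List.mem_flatMap]
    constructor
    · rintro ⟨y, ⟨x, hx, hxy⟩, r, hr⟩
      exact ⟨x, hx, r, .cons hxy hr⟩
    · rintro ⟨x, hx, r, _ | ⟨hxy, hr⟩⟩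
      exact ⟨_, ⟨x, hx, hxy⟩, r, hr⟩

def IsPowersetBisim (R : List (List Q × List Q)) : Prop :=
  ∀ P ∈ R, P.1.isEmpty = P.2.isEmpty ∧ ∀ a, (post next P.1 a, post next P.2 a) ∈ R

theorem IsPowersetBisim.hasTrace_eq {next} {R : List (List Q × List Q)}
    (hR : IsPowersetBisim next R) {P : List Q × List Q} (hP : P ∈ R) (s : List A) :
    hasTrace next P.1 s = hasTrace next P.2 s := by
  induction s generalizing P with
  | nil => simp [hasTrace, (hR P hP).1]
  | cons a s ih => exact ih ((hR P hP).2 a)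

theorem IsPowersetBisim.exists_trSeq_iff {next} {R : List (List Q × List Q)}
    (hR : IsPowersetBisim next R) {x y : Q} (hxy : ([x], [y]) ∈ R) (s : List A) :
    (∃ r, TrSeq (Step next) x s r) ↔ ∃ r, TrSeq (Step next) y s r := by
  have hx := hasTrace_iff next (S := [x]) (s := s)
  have hy := hasTrace_iff next (S := [y]) (s := s)
  simp only [List.mem_singleton, exists_eq_left] at hx hy
  rw [← hx, ← hy]
  exact Bool.eq_iff_iff.mp (hR.hasTrace_eq hxy s)

end Traces

namespace Counterexample

open Diamond

-- `grid i j` has done `i` steps of `b` and the first `j` steps of `a₁a₂`.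
inductive State : Type
  | grid (i : Fin 2) (j : Fin 3)
  | q₀ | q₁ | q₂
  deriving DecidableEq, Fintype

def next : State → Fin 3 → List State
  | .grid 0 j, 2 => [.grid 1 j]
  | .grid i 0, 0 => [.grid i 1]
  | .grid i 1, 1 => [.grid i 2]
  | .q₀, 0 => [.grid 0 1]
  | .q₀, 2 => [.q₁]
  | .q₁, 0 => [.grid 1 1, .q₂]
  | _, _ => []

noncomputable def diamond : Diamond (Fin 3) :=
  withPair (single 2 1) (x := 0) (y := 1) (by decide)

theorem conv_grid_0_0 : Conv (Step next) Eq diamond (.grid 0 0) (.grid 1 2) := by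
  refine Or.inr ⟨withPair_ne_emptyD _, fun a ha d' hd' => ?_⟩
  obtain rfl | rfl : a = 2 ∨ a = 0 := by
    simpa [diamond, mem_hdSet_withPair, pos_iff_ne_zero, Finsupp.single_apply_ne_zero] using ha
  · obtain ⟨-, rfl⟩ := (mem_tl_withPair_of_ne (by decide)).mp hd'
    refine ⟨.grid 1 0, by decide, ?_⟩
    rw [tsub_self]
    exact sConv_withPair_zero _ (t := .grid 1 1) (by decide) (by decide)
      (sConv_singleD (by decide) (by decide) rfl)
  · rw [diamond, mem_tl_withPair_self (by simp)] at hd'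
    subst hd'
    exact ⟨.grid 0 1, by decide, sConv_square (ya := .grid 1 1) (yb := .grid 0 2)
      (by decide) (by decide) (by decide)
      (sConv_singleD (by decide) (by decide) rfl) (sConv_singleD (by decide) (by decide) rfl)⟩

theorem not_conv_q₀ (c : State) : ¬ Conv (Step next) Eq diamond .q₀ c := by
  rintro (⟨hd, -⟩ | ⟨-, h⟩)
  · exact withPair_ne_emptyD _ hd
  · obtain ⟨p, hp, hconv⟩ := h 2 (mem_hdSet_withPair.mpr (Or.inl (by simp)))
      (withPair 0 (x := 0) (y := 1) (by decide))
      ((mem_tl_withPair_of_ne (by decide)).mpr ⟨by simp, by simp⟩)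
    obtain rfl : p = .q₁ := (by decide : ∀ p, Step next .q₀ 2 p → p = .q₁) p hp
    exact not_sConv_withPair_zero _ (t := .q₂) (by decide) (by decide) hconv

-- The pairs of sets of states reached from `grid 0 0` and from `q₀` by a common word.
def table : List (List State × List State) :=
  [([.grid 0 0], [.q₀]),
   ([.grid 0 1], [.grid 0 1]),
   ([], []),
   ([.grid 1 0], [.q₁]),
   ([.grid 0 2], [.grid 0 2]),
   ([.grid 1 1], [.grid 1 1]),
   ([.grid 1 1], [.grid 1 1, .q₂]),
   ([.grid 1 2], [.grid 1 2])]

theorem isPowersetBisim_table : IsPowersetBisim next table := by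
  unfold IsPowersetBisim
  decide

end Counterexample

open Diamond in
theorem stmt11 :
    ∃ (Q : Type) (_ : Finite Q) (Tr : Q → Fin 3 → Q → Prop) (p q : Q)
      (d : Diamond (Fin 3)),
      d.Ca = Finsupp.single (2 : Fin 3) 1 ∧
      d.Cs = Finsupp.single [(0 : Fin 3), 1] 1 ∧
      (∀ s : List (Fin 3), (∃ r, TrSeq Tr p s r) ↔ (∃ r, TrSeq Tr q s r)) ∧
      (∃ c, Conv Tr Eq d p c) ∧ ¬ (∃ c, Conv Tr Eq d q c) := by
  open Counterexample in
  exact ⟨State, inferInstance, Step next, .grid 0 0, .q₀, diamond, rfl, rfl,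
    isPowersetBisim_table.exists_trSeq_iff (by decide), ⟨_, conv_grid_0_0⟩,
    fun ⟨c, hc⟩ => not_conv_q₀ c hc⟩
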